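/- arXiv:2012.08005 — 4 statements merged into one kernel-verified Lean document; each statement's English description precedes it below -/
import Mathlib

section
/- For γ ∈ (0,1) and integer d ≥ 3, the incomplete beta function satisfies B(1-γ², (d-1)/2, 1/2) ≤ (1/γ) · (2/(d-1)) · (1-γ²)^((d-1)/2). -/
/-! For `b ≤ 1` the factor `(1 - t)^(b-1)` is increasing on `[0, x]`, so it is at most
`(1 - x)^(b-1)` there, and the remaining integral `∫₀ˣ t^(a-1) dt = x^a / a` is elementary.
At `x = 1 - γ²`, `b = 1/2` the constant factor is `(γ²)^(-1/2) = 1/γ`. -/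

/-- The incomplete beta function `B(x, a, b) = ∫₀ˣ t^(a-1) (1-t)^(b-1) dt`. -/
noncomputable def incBeta (x a b : ℝ) : ℝ :=
  ∫ t in (0:ℝ)..x, t ^ (a - 1) * (1 - t) ^ (b - 1)

open Set intervalIntegral

theorem integral_rpow_sub_one_zero {a : ℝ} (ha : 0 < a) (x : ℝ) :
    ∫ t in (0 : ℝ)..x, t ^ (a - 1) = x ^ a / a := by
  rw [integral_rpow (Or.inl (by linarith)), sub_add_cancel, Real.zero_rpow ha.ne', sub_zero]

theorem one_sub_rpow_le_of_le {b t x : ℝ} (hb : b ≤ 1) (htx : t ≤ x) (hx1 : x < 1) :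
    (1 - t) ^ (b - 1) ≤ (1 - x) ^ (b - 1) :=
  Real.rpow_le_rpow_of_nonpos (by linarith) (by linarith) (by linarith)

theorem incBeta_le_of_le_one {x a b : ℝ} (hx0 : 0 ≤ x) (hx1 : x < 1) (ha : 0 < a)
    (hb : b ≤ 1) : incBeta x a b ≤ (1 - x) ^ (b - 1) * (x ^ a / a) := by
  have hpow : IntervalIntegrable (fun t : ℝ => t ^ (a - 1)) MeasureTheory.volume 0 x :=
    intervalIntegrable_rpow' (by linarith)
  have hcont : ContinuousOn (fun t : ℝ => (1 - t) ^ (b - 1)) (uIcc 0 x) := by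
    refine ContinuousOn.rpow_const (by fun_prop) fun t ht => Or.inl ?_
    rw [uIcc_of_le hx0] at ht
    linarith [ht.2]
  calc incBeta x a b ≤ ∫ t in (0 : ℝ)..x, t ^ (a - 1) * (1 - x) ^ (b - 1) := by
        refine integral_mono_on hx0 (hpow.mul_continuousOn hcont) (hpow.mul_const _) ?_
        rintro t ⟨ht0, htx⟩
        exact mul_le_mul_of_nonneg_left (one_sub_rpow_le_of_le hb htx hx1)
          (Real.rpow_nonneg ht0 _)
    _ = (1 - x) ^ (b - 1) * (x ^ a / a) := by
        rw [integral_mul_const, integral_rpow_sub_one_zero ha, mul_comm]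

theorem sq_rpow_neg_half {γ : ℝ} (hγ : 0 ≤ γ) : (γ ^ 2) ^ ((1 : ℝ) / 2 - 1) = γ⁻¹ := by
  rw [← Real.rpow_natCast γ 2, ← Real.rpow_mul hγ]
  norm_num [Real.rpow_neg_one]

/-- Upper bound on the incomplete beta function `B(1-γ², (d-1)/2, 1/2)`. -/
theorem incBeta_upper_bound (γ : ℝ) (hγ : γ ∈ Set.Ioo (0:ℝ) 1) (d : ℕ) (hd : 3 ≤ d) :
    incBeta (1 - γ ^ 2) (((d:ℝ) - 1) / 2) (1 / 2) ≤
      (1 / γ) * (2 / ((d:ℝ) - 1)) * (1 - γ ^ 2) ^ (((d:ℝ) - 1) / 2) := by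
  obtain ⟨hγ0, hγ1⟩ := hγ
  have hd3 : (3 : ℝ) ≤ d := by exact_mod_cast hd
  have hbound := incBeta_le_of_le_one (x := 1 - γ ^ 2) (a := ((d : ℝ) - 1) / 2) (b := 1 / 2)
    (by nlinarith) (by nlinarith) (by linarith) (by norm_num)
  rw [sub_sub_cancel, sq_rpow_neg_half hγ0.le] at hbound
  convert hbound using 1
  field_simp
end

section
/- For γ ∈ (0,1) and integer d ≥ 5, it holds that 2^{-d} · [I_{1-γ²}((d-1)/2, 1/2)]^{-1} ≥ γ √d · ((1/2)^{3.5} / (1-γ))^((d-1)/2). -/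
/-- The regularized incomplete beta function `I_x(a,b) = B(x,a,b) / B(1,a,b)`. -/
noncomputable def regIncBeta (x a b : ℝ) : ℝ := incBeta x a b / incBeta 1 a b

open MeasureTheory ProbabilityTheory Real Set

theorem Real.sqrt_mul_Gamma_add_half_le_Gamma_add_one {x : ℝ} (hx : 0 < x) :
    √x * Gamma (x + 1 / 2) ≤ Gamma (x + 1) := by
  have hlogconvex : Gamma (x + 1 / 2) ≤ Gamma x ^ (1 / 2 : ℝ) * Gamma (x + 1) ^ (1 / 2 : ℝ) := by
    convert Gamma_mul_add_mul_le_rpow_Gamma_mul_rpow_Gamma hx (by linarith : 0 < x + 1)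
      one_half_pos one_half_pos (add_halves 1) using 2
    ring
  rw [← sqrt_eq_rpow, ← sqrt_eq_rpow] at hlogconvex
  calc √x * Gamma (x + 1 / 2) ≤ √x * (√(Gamma x) * √(Gamma (x + 1))) := by gcongr
    _ = √(x * Gamma x) * √(Gamma (x + 1)) := by
      rw [sqrt_mul hx.le, mul_assoc]
    _ = Gamma (x + 1) := by
      rw [← Gamma_add_one hx.ne', mul_self_sqrt (Gamma_pos_of_pos (by linarith)).le]

theorem incBeta_one_eq_beta {a b : ℝ} (ha : 0 < a) (hb : 0 < b) :
    incBeta 1 a b = beta a b := by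
  rw [beta_eq_betaIntegralReal a b ha hb, Complex.betaIntegral, incBeta,
    ← Complex.ofReal_re (∫ t in (0:ℝ)..1, _), ← intervalIntegral.integral_ofReal]
  congr 1
  refine intervalIntegral.integral_congr fun t ht => ?_
  rw [uIcc_of_le zero_le_one] at ht
  push_cast
  rw [Complex.ofReal_cpow ht.1, Complex.ofReal_cpow (by linarith [ht.2])]
  push_cast
  rfl

theorem sqrt_pi_mul_le_mul_beta_one_half {a : ℝ} (ha : 0 < a) :
    √(π * a) ≤ a * beta a (1 / 2) := by
  have hΓ : 0 < Gamma (a + 1 / 2) := Gamma_pos_of_pos (by linarith)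
  rw [beta, Gamma_one_half_eq, ← mul_div_assoc, le_div_iff₀ hΓ, ← mul_assoc,
    ← Gamma_add_one ha.ne', sqrt_mul pi_pos.le, mul_assoc, mul_comm _ √π]
  exact mul_le_mul_of_nonneg_left (sqrt_mul_Gamma_add_half_le_Gamma_add_one ha) (sqrt_nonneg _)

theorem intervalIntegrable_incBeta_integrand {x : ℝ} (hx : x < 1) {a : ℝ} (ha : 0 < a) (b : ℝ) :
    IntervalIntegrable (fun t => t ^ (a - 1) * (1 - t) ^ (b - 1)) volume 0 x := by
  refine (intervalIntegral.intervalIntegrable_rpow' (by linarith)).mul_continuousOn ?_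
  refine ContinuousOn.rpow_const (continuousOn_const.sub continuousOn_id) fun t ht => Or.inl ?_
  exact (sub_pos.2 (ht.2.trans_lt (max_lt one_pos hx))).ne'

theorem incBeta_pos {x : ℝ} (hx₀ : 0 < x) (hx₁ : x < 1) {a : ℝ} (ha : 0 < a) (b : ℝ) :
    0 < incBeta x a b :=
  intervalIntegral.intervalIntegral_pos_of_pos_on (intervalIntegrable_incBeta_integrand hx₁ ha b)
    (fun t ht => mul_pos (rpow_pos_of_pos ht.1 _) (rpow_pos_of_pos (by linarith [ht.2]) _)) hx₀

theorem incBeta_le_rpow_mul_rpow_div {x : ℝ} (hx₀ : 0 ≤ x) (hx₁ : x < 1) {a b : ℝ} (ha : 0 < a)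
    (hb : b ≤ 1) :
    incBeta x a b ≤ x ^ a * (1 - x) ^ (b - 1) / a := by
  have hmono : incBeta x a b ≤ ∫ t in (0:ℝ)..x, t ^ (a - 1) * (1 - x) ^ (b - 1) := by
    refine intervalIntegral.integral_mono_on hx₀ (intervalIntegrable_incBeta_integrand hx₁ ha b)
      ((intervalIntegral.intervalIntegrable_rpow' (by linarith)).mul_const _) fun t ht => ?_
    gcongr ?_ * ?_
    · exact rpow_nonneg ht.1 _
    · exact rpow_le_rpow_of_nonpos (by linarith) (by linarith [ht.2]) (by linarith)
  rwa [intervalIntegral.integral_mul_const, integral_rpow (Or.inl (by linarith)), sub_add_cancel,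
    zero_rpow ha.ne', sub_zero, div_mul_eq_mul_div] at hmono

theorem mul_beta_mul_rpow_div_rpow_le_regIncBeta_inv {x : ℝ} (hx₀ : 0 < x) (hx₁ : x < 1) {a b : ℝ}
    (ha : 0 < a) (hb₀ : 0 < b) (hb₁ : b ≤ 1) :
    a * beta a b * (1 - x) ^ (1 - b) / x ^ a ≤ (regIncBeta x a b)⁻¹ := by
  have hx₁' : 0 < 1 - x := by linarith
  rw [regIncBeta, inv_div, incBeta_one_eq_beta ha hb₀]
  calc a * beta a b * (1 - x) ^ (1 - b) / x ^ a
      = beta a b / (x ^ a * (1 - x) ^ (b - 1) / a) := by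
        rw [show b - 1 = -(1 - b) by ring, rpow_neg hx₁'.le]
        field_simp
    _ ≤ beta a b / incBeta x a b :=
        div_le_div_of_nonneg_left (beta_pos ha hb₀).le
          (incBeta_pos hx₀ hx₁ ha b) (incBeta_le_rpow_mul_rpow_div hx₀.le hx₁ ha hb₁)

/-- For `γ ∈ (0,1)` and `d ≥ 5`:
`2^{-d} [I_{1-γ²}((d-1)/2, 1/2)]⁻¹ ≥ γ √d ((1/2)^{3.5}/(1-γ))^((d-1)/2)`. -/
theorem two_pow_neg_mul_regIncBeta_inv_lower_bound (γ : ℝ) (hγ : γ ∈ Set.Ioo (0:ℝ) 1)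
    (d : ℕ) (hd : 5 ≤ d) :
    γ * Real.sqrt d * (((1:ℝ) / 2) ^ (3.5:ℝ) / (1 - γ)) ^ (((d:ℝ) - 1) / 2) ≤
      (2:ℝ) ^ (-(d:ℝ)) * (regIncBeta (1 - γ ^ 2) (((d:ℝ) - 1) / 2) (1 / 2))⁻¹ := by
  obtain ⟨hγ₀, hγ₁⟩ := hγ
  have hd' : (5:ℝ) ≤ d := by exact_mod_cast hd
  set a : ℝ := ((d:ℝ) - 1) / 2 with ha
  have hfactor : (1 - γ ^ 2) ^ a = (1 - γ) ^ a * (1 + γ) ^ a := by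
    rw [← mul_rpow (by linarith) (by linarith)]; ring_nf
  have hreg := mul_beta_mul_rpow_div_rpow_le_regIncBeta_inv (x := 1 - γ ^ 2) (by nlinarith)
    (by nlinarith) (by linarith : 0 < a) one_half_pos (by norm_num)
  rw [sub_sub_cancel, show (1:ℝ) - 1 / 2 = 1 / 2 by norm_num, ← sqrt_eq_rpow, sqrt_sq hγ₀.le,
    hfactor] at hreg
  have hbeta : √d ≤ a * beta a (1 / 2) :=
    (sqrt_le_sqrt (by nlinarith [pi_gt_three])).trans
      (sqrt_pi_mul_le_mul_beta_one_half (by linarith))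
  have hhalf : (((1:ℝ) / 2) ^ (3.5:ℝ)) ^ a ≤ 2 ^ (-(d:ℝ)) / 2 ^ a := by
    rw [← rpow_mul (by norm_num), ← rpow_sub two_pos, one_div, inv_rpow zero_le_two,
      ← rpow_neg zero_le_two]
    exact rpow_le_rpow_of_exponent_le one_le_two (by norm_num [ha]; linarith)
  have hγ2 : (1 + γ) ^ a ≤ 2 ^ a := rpow_le_rpow (by linarith) (by linarith) (by linarith)
  calc γ * √d * (((1:ℝ) / 2) ^ (3.5:ℝ) / (1 - γ)) ^ a
      = γ * √d * (((1:ℝ) / 2) ^ (3.5:ℝ)) ^ a / (1 - γ) ^ a := by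
        rw [div_rpow (by positivity) (by linarith)]; ring
    _ ≤ γ * √d * (2 ^ (-(d:ℝ)) / 2 ^ a) / (1 - γ) ^ a := by gcongr
    _ = 2 ^ (-(d:ℝ)) * (√d * γ / ((1 - γ) ^ a * 2 ^ a)) := by ring
    _ ≤ 2 ^ (-(d:ℝ)) * (a * beta a (1 / 2) * γ / ((1 - γ) ^ a * (1 + γ) ^ a)) := by
        gcongr
        exact mul_nonneg ((sqrt_nonneg _).trans hbeta) hγ₀.le
    _ ≤ _ := by gcongr
end

section
/- Let y_1, ..., y_n be points in the intersection B⁺ of the closed unit ball with the nonnegative orthant of R^d, and γ ∈ (0,1). If n · Vol(C△_γ) < Vol(B⁺) = 2^{-d} Vol(B), then there exists a unit vector w̃ ∈ ∂B⁺ with all coordinates strictly positive such that no y_i lies in the cap C_γ(w̃). -/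
open scoped ENNReal

/-- The `γ`-hyperspherical cap in direction `w`. -/
def cap (d : ℕ) (γ : ℝ) (w : EuclideanSpace ℝ (Fin d)) : Set (EuclideanSpace ℝ (Fin d)) :=
  {x | ‖x‖ ≤ 1 ∧ γ ≤ (inner ℝ x w : ℝ) / ‖w‖}

/-- The `γ`-hyperspherical sector in direction `w` (excluding `0`). -/
def sector (d : ℕ) (γ : ℝ) (w : EuclideanSpace ℝ (Fin d)) : Set (EuclideanSpace ℝ (Fin d)) :=
  {x | ‖x‖ ≤ 1 ∧ x ≠ 0 ∧ γ ≤ (inner ℝ x w : ℝ) / (‖x‖ * ‖w‖)}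

/-!
If `x ≠ 0` lies in the ball and some `y i` lies in the `γ`-cap of `x / ‖x‖`, then `x` lies in
the `γ`-sector of `y i`, because `‖y i‖ ≤ 1`. So it suffices to find a point of the ball with
positive coordinates outside the `n` sectors of the `y i`. These have total volume
`< Vol(B) / 2^d`, whereas the `2^d` sign-flipped copies of the closed orthant cover the ball and
the coordinate hyperplanes are null, so the open orthant of the ball has volume `≥ Vol(B) / 2^d`.
-/

open MeasureTheory Metric

section Orthant

variable {ι : Type*} [Fintype ι]

noncomputable def signFlip (s : ι → Bool) : EuclideanSpace ℝ ι ≃ₗᵢ[ℝ] EuclideanSpace ℝ ι :=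
  LinearIsometryEquiv.piLpCongrRight 2
    fun j => if s j then LinearIsometryEquiv.refl ℝ ℝ else LinearIsometryEquiv.neg ℝ

lemma signFlip_apply (s : ι → Bool) (x : EuclideanSpace ℝ ι) (j : ι) :
    signFlip s x j = if s j then x j else -x j := by
  unfold signFlip
  split_ifs with h <;> simp [LinearIsometryEquiv.piLpCongrRight_apply, h]

lemma exists_signFlip_nonneg (x : EuclideanSpace ℝ ι) : ∃ s, ∀ j, 0 ≤ signFlip s x j := by
  refine ⟨fun j => decide (0 ≤ x j), fun j => ?_⟩
  rw [signFlip_apply]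
  by_cases h : 0 ≤ x j
  · simp [h]
  · simp only [h, decide_false, Bool.false_eq_true, if_false]
    linarith

lemma volume_closedBall_le_two_pow_mul_volume_nonneg (r : ℝ) :
    volume (closedBall (0 : EuclideanSpace ℝ ι) r) ≤
      2 ^ Fintype.card ι * volume (closedBall (0 : EuclideanSpace ℝ ι) r ∩ {x | ∀ j, 0 ≤ x j}) := by
  classical
  set P := closedBall (0 : EuclideanSpace ℝ ι) r ∩ {x | ∀ j, 0 ≤ x j}
  have hP : MeasurableSet P := by
    refine measurableSet_closedBall.inter ?_
    simp only [Set.ofPred_forall]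
    exact MeasurableSet.iInter fun j => measurableSet_le measurable_const (by fun_prop)
  have hcover : closedBall 0 r ⊆ ⋃ s : ι → Bool, signFlip s ⁻¹' P := fun x hx => by
    obtain ⟨s, hs⟩ := exists_signFlip_nonneg x
    exact Set.mem_iUnion.2 ⟨s, by simpa using hx, hs⟩
  calc volume (closedBall 0 r)
      ≤ ∑ s : ι → Bool, volume (signFlip s ⁻¹' P) :=
        (measure_mono hcover).trans (measure_iUnion_fintype_le _ _)
    _ = 2 ^ Fintype.card ι * volume P := by
        simp [(signFlip _).measurePreserving.measure_preimage hP.nullMeasurableSet]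

lemma volume_setOf_exists_eq_zero : volume {x : EuclideanSpace ℝ ι | ∃ j, x j = 0} = 0 := by
  simp only [Set.ofPred_exists]
  refine measure_iUnion_null fun j => ?_
  classical
  have hker : LinearMap.ker (EuclideanSpace.proj (𝕜 := ℝ) (ι := ι) j).toLinearMap ≠ ⊤ := by
    rw [Ne, LinearMap.ker_eq_top]
    intro h
    simpa using LinearMap.congr_fun h (EuclideanSpace.single j 1)
  exact Measure.addHaar_submodule volume _ hker

lemma volume_closedBall_div_two_pow_le_volume_pos (r : ℝ) :
    volume (closedBall (0 : EuclideanSpace ℝ ι) r) / 2 ^ Fintype.card ι ≤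
      volume (closedBall (0 : EuclideanSpace ℝ ι) r ∩ {x | ∀ j, 0 < x j}) := by
  rw [ENNReal.div_le_iff (by positivity) (by simp), mul_comm]
  refine (volume_closedBall_le_two_pow_mul_volume_nonneg r).trans (mul_le_mul_right ?_ _)
  rw [← measure_sdiff_null (volume_setOf_exists_eq_zero (ι := ι))]
  exact measure_mono fun x ⟨⟨hx, hnonneg⟩, hne⟩ =>
    ⟨hx, fun j => (hnonneg j).lt_of_ne' fun h => hne ⟨j, h⟩⟩

end Orthant

lemma ENNReal.sum_lt_of_forall_card_mul_lt {ι : Type*} [Fintype ι] {a : ι → ℝ≥0∞} {V : ℝ≥0∞}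
    (hV : 0 < V) (h : ∀ i, Fintype.card ι * a i < V) : ∑ i, a i < V := by
  rcases isEmpty_or_nonempty ι with hι | hι
  · simpa using hV
  obtain ⟨i₀, -, hi₀⟩ := Finset.exists_max_image Finset.univ a Finset.univ_nonempty
  calc ∑ i, a i ≤ ∑ _i, a i₀ := Finset.sum_le_sum fun i _ => hi₀ i (Finset.mem_univ i)
    _ = Fintype.card ι * a i₀ := by simp
    _ < V := h i₀

section CapSector

variable {d : ℕ} {γ : ℝ}

lemma cap_smul (w : EuclideanSpace ℝ (Fin d)) {c : ℝ} (hc : 0 < c) :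
    cap d γ (c • w) = cap d γ w := by
  ext x
  simp only [cap, Set.mem_ofPred_eq, real_inner_smul_right, norm_smul, Real.norm_of_nonneg hc.le,
    mul_div_mul_left _ _ hc.ne']

lemma sector_zero (hγ : 0 < γ) : sector d γ 0 = ∅ :=
  Set.eq_empty_of_forall_notMem fun x ⟨_, _, hx⟩ => by simp at hx; linarith

lemma mem_sector_of_mem_cap (hγ : 0 < γ) {x y : EuclideanSpace ℝ (Fin d)} (hy : y ∈ cap d γ x)
    (hx : ‖x‖ ≤ 1) : x ∈ sector d γ y := by
  obtain ⟨hy1, hyx⟩ := hy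
  have hpos : 0 < inner ℝ y x / ‖x‖ := hγ.trans_le hyx
  have hx0 : x ≠ 0 := by rintro rfl; simp at hpos
  have hy0 : y ≠ 0 := by rintro rfl; simp at hpos
  refine ⟨hx, hx0, hyx.trans ?_⟩
  rw [real_inner_comm y, ← div_div]
  exact le_div_self hpos.le (norm_pos_iff.2 hy0) hy1

end CapSector

theorem exists_lonely_cap_positive_orthant_general (d n : ℕ) (hd : 2 ≤ d) (γ : ℝ)
    (hγ : γ ∈ Set.Ioo (0:ℝ) 1)
    (y : Fin n → EuclideanSpace ℝ (Fin d))
    (hvol : ∀ w : EuclideanSpace ℝ (Fin d), w ≠ 0 →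
      (n : ℝ≥0∞) * MeasureTheory.volume (sector d γ w) <
        MeasureTheory.volume (Metric.closedBall (0 : EuclideanSpace ℝ (Fin d)) 1) / 2 ^ d) :
    ∃ w : EuclideanSpace ℝ (Fin d), ‖w‖ = 1 ∧ (∀ j, 0 < w j) ∧
      ∀ i, y i ∉ cap d γ w := by
  set O := closedBall (0 : EuclideanSpace ℝ (Fin d)) 1 ∩ {x | ∀ j, 0 < x j}
  have hV : 0 < volume (closedBall (0 : EuclideanSpace ℝ (Fin d)) 1) / 2 ^ d :=
    ENNReal.div_pos (measure_closedBall_pos _ _ one_pos).ne' (by simp)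
  have hsector : ∀ i, (n : ℝ≥0∞) * volume (sector d γ (y i)) <
      volume (closedBall (0 : EuclideanSpace ℝ (Fin d)) 1) / 2 ^ d := fun i => by
    rcases eq_or_ne (y i) 0 with h | h
    · simpa [h, sector_zero hγ.1] using hV
    · exact hvol _ h
  have hunion : volume (⋃ i, sector d γ (y i)) < volume O := calc
    _ ≤ ∑ i, volume (sector d γ (y i)) := measure_iUnion_fintype_le _ _
    _ < _ := ENNReal.sum_lt_of_forall_card_mul_lt hV (by simpa using hsector)
    _ ≤ volume O := by simpa using volume_closedBall_div_two_pow_le_volume_pos (ι := Fin d) 1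
  obtain ⟨x, ⟨hx1, hxpos⟩, hxy⟩ : (O \ ⋃ i, sector d γ (y i)).Nonempty :=
    Set.sdiff_nonempty.2 fun h => (measure_mono h).not_gt hunion
  have hx0 : 0 < ‖x‖ := norm_pos_iff.2 fun h => by simpa [h] using hxpos ⟨0, by omega⟩
  refine ⟨‖x‖⁻¹ • x, norm_smul_inv_norm (norm_pos_iff.1 hx0), fun j => mul_pos (inv_pos.2 hx0) (hxpos j),
    fun i hi => hxy (Set.mem_iUnion.2 ⟨i, ?_⟩)⟩
  rw [cap_smul _ (inv_pos.2 hx0)] at hi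
  exact mem_sector_of_mem_cap hγ.1 hi (by simpa using hx1)

/-- Existence of a lonely spherical cap in the positive orthant: if the `n` sectors
cannot cover `B⁺` (whose volume is `2^{-d}` times that of the ball), then there is a
unit direction `w̃` with strictly positive coordinates whose `γ`-cap contains no `y i`. -/
theorem exists_lonely_cap_positive_orthant (d n : ℕ) (hd : 2 ≤ d) (γ : ℝ)
    (hγ : γ ∈ Set.Ioo (0:ℝ) 1)
    (y : Fin n → EuclideanSpace ℝ (Fin d))
    (hy : ∀ i, ‖y i‖ ≤ 1 ∧ ∀ j, 0 ≤ y i j)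
    (hvol : ∀ w : EuclideanSpace ℝ (Fin d), w ≠ 0 →
      (n : ℝ≥0∞) * MeasureTheory.volume (sector d γ w) <
        MeasureTheory.volume (Metric.closedBall (0 : EuclideanSpace ℝ (Fin d)) 1) / 2 ^ d) :
    ∃ w : EuclideanSpace ℝ (Fin d), ‖w‖ = 1 ∧ (∀ j, 0 < w j) ∧
      ∀ i, y i ∉ cap d γ w :=
  exists_lonely_cap_positive_orthant_general d n hd γ hγ y hvol
end

section
/- Fix γ ∈ (0,1) and a unit vector w ∈ R^d. With T and the dynamics as above, the function Q₋(a) = -⟨a,w⟩ satisfies Q₋(a) = r₋(a) + γ·Q₋(T(a)) for every a in the closed unit ball, where r₋(a) = -(1-γ)⟨a,w⟩ if |⟨a,w⟩| ≥ γ and r₋(a) = 0 otherwise. -/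
open scoped InnerProductSpace

theorem real_inner_smul_left_of_norm_eq_one {E : Type*} [NormedAddCommGroup E]
    [InnerProductSpace ℝ E] {w : E} (hw : ‖w‖ = 1) (c : ℝ) : ⟪c • w, w⟫_ℝ = c := by
  rw [real_inner_smul_left, inner_self_eq_one_of_norm_eq_one hw, mul_one]

/-- Bellman evaluation equation on the negated MDP: `Q₋(a) = -⟨a,w⟩` satisfies
`Q₋(a) = r₋(a) + γ Q₋(T(a))` on the closed unit ball. -/
theorem bellman_evaluation_minus (d : ℕ) (γ : ℝ) (hγ : γ ∈ Set.Ioo (0:ℝ) 1)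
    (w : EuclideanSpace ℝ (Fin d)) (hw : ‖w‖ = 1)
    (T : EuclideanSpace ℝ (Fin d) → EuclideanSpace ℝ (Fin d))
    (hT : ∀ a, T a =
      if |(inner ℝ a w : ℝ)| < γ then ((1 / γ) * (inner ℝ a w : ℝ)) • w else a)
    (r : EuclideanSpace ℝ (Fin d) → ℝ)
    (hr : ∀ a, r a = if γ ≤ |(inner ℝ a w : ℝ)| then -((1 - γ) * (inner ℝ a w : ℝ)) else 0) :
    ∀ a : EuclideanSpace ℝ (Fin d), ‖a‖ ≤ 1 →
      -(inner ℝ a w : ℝ) = r a + γ * -(inner ℝ (T a) w : ℝ) := by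
  intro a _
  have hγ0 : γ ≠ 0 := hγ.1.ne'
  rw [hT a, hr a]
  by_cases hband : |⟪a, w⟫_ℝ| < γ
  · rw [if_pos hband, if_neg (not_le.2 hband), real_inner_smul_left_of_norm_eq_one hw]
    field_simp
    ring
  · rw [if_neg hband, if_pos (not_lt.1 hband)]
    ring
end
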